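/- As z → 0 with z ≠ 0 (z in the punctured open unit disk), z · g(z) tends to 4/(3√3), where g is the exterior mapping function of the upper half-disk defined via m(z) = ((√3/2 + i/2) + 1/z)/((−√3/2 + i/2) + 1/z) and g(z) = (1 + 2·m(z)^{3/2} + m(z)³)/(m(z)³ − 1), using principal branch complex powers. In other words, the outer radius (logarithmic capacity) of the upper half of the unit disk equals 4/(3√3). -/

import Mathlib

/-!
The map `m` is the Möbius transformation `z ↦ (a z + 1)/(b z + 1)` with `a - b = √3`, so
`m(z) → 1` and `m(z) - 1 = √3 z/(b z + 1)`, whence `z/(m(z) - 1) → 1/√3`. Factoring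
`m³ - 1 = (m - 1)(m² + m + 1)` leaves `(1 + 2m^{3/2} + m³)/(m² + m + 1)`, which is continuous at
`m = 1` (the principal power is continuous off the slit) and tends to `4/3` there.
-/

open Complex Filter

/-- `m(z) = ((√3/2 + i/2) + 1/z)/((−√3/2 + i/2) + 1/z)`. -/
noncomputable def mMap (z : ℂ) : ℂ :=
  (((Real.sqrt 3 / 2 : ℝ) : ℂ) + I / 2 + 1 / z) /
    (-((Real.sqrt 3 / 2 : ℝ) : ℂ) + I / 2 + 1 / z)

/-- `g(z) = (1 + 2m(z)^{3/2} + m(z)³)/(m(z)³ − 1)` with the principal branch power. -/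
noncomputable def gMap (z : ℂ) : ℂ :=
  (1 + 2 * mMap z ^ ((3 : ℂ) / 2) + mMap z ^ (3 : ℕ)) / (mMap z ^ (3 : ℕ) - 1)

open Topology

section RecipMobius

variable (a b : ℂ)

/-- Written in `1/z`, like `mMap`, so that `mMap` is an instance by `rfl`. -/
noncomputable def recipMobius (z : ℂ) : ℂ := (a + 1 / z) / (b + 1 / z)

lemma recipMobius_eq {z : ℂ} (hz : z ≠ 0) : recipMobius a b z = (a * z + 1) / (b * z + 1) := by
  rw [recipMobius, ← mul_div_mul_right _ _ hz]
  congr 1 <;> field_simp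

lemma tendsto_recipMobius : Tendsto (recipMobius a b) (𝓝[≠] 0) (𝓝 1) := by
  have hcont : ContinuousAt (fun z : ℂ => (a * z + 1) / (b * z + 1)) 0 :=
    ContinuousAt.div (by fun_prop) (by fun_prop) (by simp)
  have hlim := hcont.tendsto.mono_left (nhdsWithin_le_nhds (s := {0}ᶜ))
  simp only [mul_zero, zero_add, div_one] at hlim
  refine hlim.congr' ?_
  filter_upwards [self_mem_nhdsWithin] with z hz
  exact (recipMobius_eq a b hz).symm

lemma tendsto_div_recipMobius_sub_one :
    Tendsto (fun z => z / (recipMobius a b z - 1)) (𝓝[≠] 0) (𝓝 (a - b)⁻¹) := by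
  have hcont : ContinuousAt (fun z : ℂ => (b * z + 1) / (a - b)) 0 := by fun_prop
  have hlim := hcont.tendsto.mono_left (nhdsWithin_le_nhds (s := {0}ᶜ))
  simp only [mul_zero, zero_add, one_div] at hlim
  have hden : ∀ᶠ z in 𝓝[≠] (0 : ℂ), b * z + 1 ≠ 0 := by
    have : ContinuousAt (fun z : ℂ => b * z + 1) 0 := by fun_prop
    simpa using (this.eventually_ne (by simp)).filter_mono nhdsWithin_le_nhds
  refine hlim.congr' ?_
  filter_upwards [self_mem_nhdsWithin, hden] with z hz hbz
  have hsub : recipMobius a b z - 1 = (a - b) * z / (b * z + 1) := by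
    rw [recipMobius_eq a b hz, div_sub_one hbz]
    ring
  rw [hsub, div_div_eq_mul_div, mul_comm (a - b), mul_div_mul_left _ _ hz]

end RecipMobius

lemma tendsto_cubic_ratio_one :
    Tendsto (fun w : ℂ => (1 + 2 * w ^ ((3 : ℂ) / 2) + w ^ 3) / (w ^ 2 + w + 1)) (𝓝 1)
      (𝓝 (4 / 3)) := by
  have hcpow : ContinuousAt (fun w : ℂ => w ^ ((3 : ℂ) / 2)) 1 :=
    continuousAt_cpow_const (by simp)
  have hcont : ContinuousAt
      (fun w : ℂ => (1 + 2 * w ^ ((3 : ℂ) / 2) + w ^ 3) / (w ^ 2 + w + 1)) 1 :=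
    ContinuousAt.div (by fun_prop) (by fun_prop) (by norm_num)
  convert hcont.tendsto using 2
  norm_num

-- No side conditions: with `x / 0 = 0` both sides vanish when `m(z)³ = 1`.
lemma mul_gMap (z : ℂ) : z * gMap z = z / (mMap z - 1) *
    ((1 + 2 * mMap z ^ ((3 : ℂ) / 2) + mMap z ^ 3) / (mMap z ^ 2 + mMap z + 1)) := by
  rw [gMap, div_mul_div_comm, ← mul_div_assoc]
  congr 1
  ring

theorem stmt_5 :
    Tendsto (fun z : ℂ => z * gMap z)
      (nhdsWithin 0 (Metric.ball (0 : ℂ) 1 \ {0}))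
      (nhds ((4 / (3 * Real.sqrt 3) : ℝ) : ℂ)) := by
  set a : ℂ := ((Real.sqrt 3 / 2 : ℝ) : ℂ) + I / 2 with ha
  set b : ℂ := -((Real.sqrt 3 / 2 : ℝ) : ℂ) + I / 2 with hb
  have hm : mMap = recipMobius a b := rfl
  have hab : a - b = Real.sqrt 3 := by rw [ha, hb]; push_cast; ring
  have hlim := (hab ▸ tendsto_div_recipMobius_sub_one a b).mul
    (tendsto_cubic_ratio_one.comp (tendsto_recipMobius a b))
  rw [← hm] at hlim
  have hval : ((4 / (3 * Real.sqrt 3) : ℝ) : ℂ) = (Real.sqrt 3 : ℂ)⁻¹ * (4 / 3) := by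
    push_cast
    ring
  rw [hval, funext mul_gMap]
  exact hlim.mono_left (nhdsWithin_mono _ (Set.sdiff_subset_compl _ _))
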